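/- Let A be a self-adjoint endomorphism of a finite-dimensional real inner product space and let c ≥ 0. If every eigenvalue of A is ≥ c, then for every pair of orthonormal vectors X, Y one has ⟨AX,X⟩⟨AY,Y⟩ − ⟨AX,Y⟩² ≥ c². Moreover, if every eigenvalue of A is strictly greater than c, then the inequality is strict. -/

import Mathlib

/-!
The least eigenvalue `μ` of `A` is the minimum of its Rayleigh quotient, so `A - μ` is positive
semidefinite. Cauchy–Schwarz for the form `⟪(A - μ) ·, ·⟫` at the orthonormal pair `X, Y` gives
`t ^ 2 ≤ (a - μ) (d - μ)` for `a = ⟪A X, X⟫`, `d = ⟪A Y, Y⟫`, `t = ⟪A X, Y⟫`, and then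
`a d - t ^ 2 = (a - μ) (d - μ) - t ^ 2 + μ ((a - μ) + (d - μ)) + μ ^ 2 ≥ μ ^ 2`,
which is `≥ c ^ 2`, resp. `> c ^ 2`, as soon as `0 ≤ c ≤ μ`, resp. `0 ≤ c < μ`.
-/

open Module.End

namespace LinearMap

variable {E : Type*} [NormedAddCommGroup E] [InnerProductSpace ℝ E]

/-- Cauchy–Schwarz for `⟪B ·, ·⟫`, via the discriminant of `s ↦ ⟪B (x + s • y), x + s • y⟫ ≥ 0`. -/
theorem IsPositive.real_inner_sq_le_inner_mul_inner {B : E →ₗ[ℝ] E} (hB : B.IsPositive)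
    (x y : E) : inner ℝ (B x) y ^ 2 ≤ inner ℝ (B x) x * inner ℝ (B y) y := by
  have hquad (s : ℝ) :
      0 ≤ inner ℝ (B y) y * (s * s) + 2 * inner ℝ (B x) y * s + inner ℝ (B x) x := by
    have hsymm : inner ℝ (B y) x = inner ℝ (B x) y := by rw [hB.isSymmetric, real_inner_comm]
    have := hB.inner_nonneg_left (x + s • y)
    simp only [map_add, map_smul, inner_add_left, inner_add_right, real_inner_smul_left,
      real_inner_smul_right, hsymm] at this
    linarith
  have := discrim_le_zero hquad
  rw [discrim] at this
  linarith

theorem IsSymmetric.exists_hasEigenvalue_mul_norm_sq_le [FiniteDimensional ℝ E] [Nontrivial E]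
    {T : E →ₗ[ℝ] E} (hT : T.IsSymmetric) :
    ∃ μ, HasEigenvalue T μ ∧ ∀ v, μ * ‖v‖ ^ 2 ≤ inner ℝ (T v) v := by
  refine ⟨_, hT.hasEigenvalue_iInf_of_finiteDimensional, fun v => ?_⟩
  rcases eq_or_ne v 0 with rfl | hv
  · simp
  have hbdd : BddBelow (Set.range fun x : {x : E // x ≠ 0} =>
      RCLike.re (inner ℝ (T x) x) / ‖(x : E)‖ ^ 2) :=
    ⟨-‖T.toContinuousLinearMap‖, by
      rintro _ ⟨x, rfl⟩
      exact neg_le_of_abs_le (T.toContinuousLinearMap.rayleighQuotient_le_norm x)⟩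
  have := ciInf_le hbdd ⟨v, hv⟩
  rwa [le_div_iff₀ (by positivity)] at this

theorem IsSymmetric.isPositive_sub_smul_one {T : E →ₗ[ℝ] E} (hT : T.IsSymmetric) {c : ℝ}
    (h : ∀ v, c * ‖v‖ ^ 2 ≤ inner ℝ (T v) v) : (T - c • 1).IsPositive := by
  refine ⟨hT.sub (IsSymmetric.one.smul (conj_trivial c)), fun v => ?_⟩
  have := h v
  simp only [sub_apply, smul_apply, one_apply, inner_sub_left, real_inner_smul_left,
    real_inner_self_eq_norm_sq, RCLike.re_to_real]
  linarith

theorem IsSymmetric.sq_le_det_compression {T : E →ₗ[ℝ] E} (hT : T.IsSymmetric) {c : ℝ}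
    (hc : 0 ≤ c) (h : ∀ v, c * ‖v‖ ^ 2 ≤ inner ℝ (T v) v)
    {X Y : E} (hX : ‖X‖ = 1) (hY : ‖Y‖ = 1) (hXY : inner ℝ X Y = 0) :
    c ^ 2 ≤ inner ℝ (T X) X * inner ℝ (T Y) Y - inner ℝ (T X) Y ^ 2 := by
  have hB := (hT.isPositive_sub_smul_one h).real_inner_sq_le_inner_mul_inner X Y
  have hXX := h X
  have hYY := h Y
  simp only [sub_apply, smul_apply, one_apply, inner_sub_left, real_inner_smul_left,
    real_inner_self_eq_norm_sq, hX, hY, hXY] at hB hXX hYY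
  nlinarith

end LinearMap

theorem det_compression_of_eigenvalue_bound
    {V : Type*} [NormedAddCommGroup V] [InnerProductSpace ℝ V] [FiniteDimensional ℝ V]
    (A : Module.End ℝ V) (hA : LinearMap.IsSymmetric A)
    (c : ℝ) (hc : 0 ≤ c)
    (X Y : V) (hX : ‖X‖ = 1) (hY : ‖Y‖ = 1) (hXY : (inner ℝ X Y : ℝ) = 0) :
    ((∀ μ : ℝ, Module.End.HasEigenvalue A μ → c ≤ μ) →
      c ^ 2 ≤ (inner ℝ (A X) X : ℝ) * (inner ℝ (A Y) Y : ℝ) - (inner ℝ (A X) Y : ℝ) ^ 2) ∧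
    ((∀ μ : ℝ, Module.End.HasEigenvalue A μ → c < μ) →
      c ^ 2 < (inner ℝ (A X) X : ℝ) * (inner ℝ (A Y) Y : ℝ) - (inner ℝ (A X) Y : ℝ) ^ 2) := by
  have : Nontrivial V := ⟨X, 0, by rintro rfl; simp at hX⟩
  obtain ⟨μ, hμ, hrayleigh⟩ := hA.exists_hasEigenvalue_mul_norm_sq_le
  have hdet (hcμ : c ≤ μ) : μ ^ 2 ≤ _ :=
    hA.sq_le_det_compression (hc.trans hcμ) hrayleigh hX hY hXY
  refine ⟨fun h => ?_, fun h => ?_⟩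
  · exact (pow_le_pow_left₀ hc (h μ hμ) 2).trans (hdet (h μ hμ))
  · exact (pow_lt_pow_left₀ (h μ hμ) hc two_ne_zero).trans_le (hdet (h μ hμ).le)
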